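/- Support respects weakening and contraction of additive bunches of hypotheses: for any base B, resource bunch S, contextual bunch of formulae Γ(·), and bunches of formulae Δ, Δ': (i) if ⊩_B^S Γ(Δ ⨟ Δ') then ⊩_B^S Γ(Δ); (ii) if ⊩_B^S Γ(Δ) then ⊩_B^S Γ(Δ ⨟ Δ). -/
import Mathlib


/-- Bunches over a set `X`: trees with additive (`semi`, unit `aunit`) and
multiplicative (`comma`, unit `munit`) context-formers. -/
inductive Bunch (X : Type) : Type
  | leaf (x : X)
  | aunit
  | munit
  | semi (Γ Δ : Bunch X)
  | comma (Γ Δ : Bunch X)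

/-- Bunches with a single hole (contextual bunches). -/
inductive BunchCtx (X : Type) : Type
  | hole
  | semiL (c : BunchCtx X) (Δ : Bunch X)
  | semiR (Γ : Bunch X) (c : BunchCtx X)
  | commaL (c : BunchCtx X) (Δ : Bunch X)
  | commaR (Γ : Bunch X) (c : BunchCtx X)

/-- Plugging a bunch into the hole of a contextual bunch. -/
def BunchCtx.fill {X : Type} : BunchCtx X → Bunch X → Bunch X
  | .hole, Δ => Δ
  | .semiL c Θ, Δ => .semi (c.fill Δ) Θ
  | .semiR Γ c, Δ => .semi Γ (c.fill Δ)
  | .commaL c Θ, Δ => .comma (c.fill Δ) Θ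
  | .commaR Γ c, Δ => .comma Γ (c.fill Δ)

/-- Composition of contextual bunches: `(c.comp d).fill Δ = c.fill (d.fill Δ)`. -/
def BunchCtx.comp {X : Type} : BunchCtx X → BunchCtx X → BunchCtx X
  | .hole, d => d
  | .semiL c Θ, d => .semiL (c.comp d) Θ
  | .semiR Γ c, d => .semiR Γ (c.comp d)
  | .commaL c Θ, d => .commaL (c.comp d) Θ
  | .commaR Γ c, d => .commaR Γ (c.comp d)

/-- Coherent equivalence: least equivalence relation containing the
commutative-monoid equations for each context-former with its unit, closed
under congruence (substitution of equivalent sub-bunches). -/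
inductive CohEq {X : Type} : Bunch X → Bunch X → Prop
  | refl (Γ) : CohEq Γ Γ
  | symm {Γ Δ} : CohEq Γ Δ → CohEq Δ Γ
  | trans {Γ Δ Θ} : CohEq Γ Δ → CohEq Δ Θ → CohEq Γ Θ
  | semiAssoc (Γ₁ Γ₂ Γ₃) : CohEq (.semi (.semi Γ₁ Γ₂) Γ₃) (.semi Γ₁ (.semi Γ₂ Γ₃))
  | semiComm (Γ₁ Γ₂) : CohEq (.semi Γ₁ Γ₂) (.semi Γ₂ Γ₁)
  | semiUnit (Γ) : CohEq (.semi Γ .aunit) Γ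
  | commaAssoc (Γ₁ Γ₂ Γ₃) : CohEq (.comma (.comma Γ₁ Γ₂) Γ₃) (.comma Γ₁ (.comma Γ₂ Γ₃))
  | commaComm (Γ₁ Γ₂) : CohEq (.comma Γ₁ Γ₂) (.comma Γ₂ Γ₁)
  | commaUnit (Γ) : CohEq (.comma Γ .munit) Γ
  | congr (c : BunchCtx X) {Δ Δ'} : CohEq Δ Δ' → CohEq (c.fill Δ) (c.fill Δ')

/-- Bunch-extension `Γ ⪰ Γ'`: least transitive relation such that `Γ ⪰ Γ'`
whenever `Γ` is coherently equivalent to `Γ'` with one occurrence of a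
sub-bunch `Δ` replaced by `Δ ⨟ Δ'`. -/
inductive BunchExt {X : Type} : Bunch X → Bunch X → Prop
  | step (c : BunchCtx X) (Δ Δ' : Bunch X) {Γ : Bunch X} :
      CohEq Γ (c.fill (.semi Δ Δ')) → BunchExt Γ (c.fill Δ)
  | trans {Γ Δ Θ} : BunchExt Γ Δ → BunchExt Δ Θ → BunchExt Γ Θ

/-- An atomic rule: a finite list of premiss sequents of atoms and a
conclusion sequent of atoms. -/
structure AtomicRule (A : Type) : Type where
  prems : List (Bunch A × A)
  concl : Bunch A × A

/-- A base: a set of atomic rules. -/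
abbrev Base (A : Type) := Set (AtomicRule A)

/-- Derivability in a base. -/
inductive Deriv {A : Type} (B : Base A) : Bunch A → A → Prop
  | taut (p : A) : Deriv B (.leaf p) p
  | rule (r : AtomicRule A) (hr : r ∈ B)
      (hp : ∀ pr ∈ r.prems, Deriv B pr.1 pr.2) : Deriv B r.concl.1 r.concl.2
  | weak (c : BunchCtx A) (Q Q' : Bunch A) {p : A} :
      Deriv B (c.fill Q) p → Deriv B (c.fill (.semi Q Q')) p
  | cont (c : BunchCtx A) (Q : Bunch A) {p : A} :
      Deriv B (c.fill (.semi Q Q)) p → Deriv B (c.fill Q) p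
  | exch (c : BunchCtx A) {Q Q' : Bunch A} {p : A} :
      Deriv B (c.fill Q) p → CohEq Q Q' → Deriv B (c.fill Q') p
  | cut (c : BunchCtx A) {T : Bunch A} {q p : A} :
      Deriv B T q → Deriv B (c.fill (.leaf q)) p → Deriv B (c.fill T) p

/-- Formulae of BI. -/
inductive Form (A : Type) : Type
  | atom (p : A)
  | top
  | bot
  | mtop
  | and (φ ψ : Form A)
  | or (φ ψ : Form A)
  | imp (φ ψ : Form A)
  | star (φ ψ : Form A)
  | wand (φ ψ : Form A)

/-- Support of a formula in a base relative to an atomic resource bunch. -/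
def suppF {A : Type} : Form A → Base A → Bunch A → Prop
  | .atom p, B, S => Deriv B S p
  | .and φ ψ, B, S => ∀ (X : Base A), B ⊆ X → ∀ (U : BunchCtx A) (p : A),
      (∀ (Y : Base A), X ⊆ Y → ∀ (V : Bunch A),
        (∃ Q₁ Q₂, BunchExt V Q₁ ∧ BunchExt V Q₂ ∧ suppF φ Y Q₁ ∧ suppF ψ Y Q₂) →
        Deriv Y (U.fill V) p) →
      Deriv X (U.fill S) p
  | .star φ ψ, B, S => ∀ (X : Base A), B ⊆ X → ∀ (U : BunchCtx A) (p : A),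
      (∀ (Y : Base A), X ⊆ Y → ∀ (V : Bunch A),
        (∃ Q₁ Q₂, BunchExt V (.comma Q₁ Q₂) ∧ suppF φ Y Q₁ ∧ suppF ψ Y Q₂) →
        Deriv Y (U.fill V) p) →
      Deriv X (U.fill S) p
  | .or φ ψ, B, S => ∀ (X : Base A), B ⊆ X → ∀ (U : BunchCtx A) (p : A),
      (∀ (Y : Base A), X ⊆ Y → ∀ (V : Bunch A), suppF φ Y V → Deriv Y (U.fill V) p) →
      (∀ (Y : Base A), X ⊆ Y → ∀ (V : Bunch A), suppF ψ Y V → Deriv Y (U.fill V) p) →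
      Deriv X (U.fill S) p
  | .imp φ ψ, B, S => ∀ (X : Base A), B ⊆ X → ∀ (U : Bunch A),
      suppF φ X U → suppF ψ X (.semi S U)
  | .wand φ ψ, B, S => ∀ (X : Base A), B ⊆ X → ∀ (U : Bunch A),
      suppF φ X U → suppF ψ X (.comma S U)
  | .bot, B, S => ∀ (U : BunchCtx A) (p : A), Deriv B (U.fill S) p
  | .top, B, S => ∀ (X : Base A), B ⊆ X → ∀ (U : BunchCtx A) (p : A),
      Deriv X (U.fill .aunit) p → Deriv X (U.fill S) p
  | .mtop, B, S => ∀ (X : Base A), B ⊆ X → ∀ (U : BunchCtx A) (p : A),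
      Deriv X (U.fill .munit) p → Deriv X (U.fill S) p

/-- Support of a bunch of formulae. -/
def suppB {A : Type} : Bunch (Form A) → Base A → Bunch A → Prop
  | .leaf φ, B, S => suppF φ B S
  | .aunit, _, _ => True
  | .munit, _, S => BunchExt S .munit
  | .semi Γ Δ, B, S =>
      ∃ Q₁ Q₂, BunchExt S Q₁ ∧ BunchExt S Q₂ ∧ suppB Γ B Q₁ ∧ suppB Δ B Q₂
  | .comma Γ Δ, B, S =>
      ∃ Q₁ Q₂, BunchExt S (.comma Q₁ Q₂) ∧ suppB Γ B Q₁ ∧ suppB Δ B Q₂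

/-- The support judgement `Γ ⊩_B^{R(·)} φ` (clause (Inf)). -/
def SuppInf {A : Type} (B : Base A) (R : BunchCtx A) (Γ : Bunch (Form A))
    (φ : Form A) : Prop :=
  ∀ (X : Base A), B ⊆ X → ∀ (U : Bunch A), suppB Γ X U → suppF φ X (R.fill U)

/-- Validity: support with the identity contextual bunch in every base. -/
def Valid {A : Type} (Γ : Bunch (Form A)) (φ : Form A) : Prop :=
  ∀ B : Base A, SuppInf B .hole Γ φ

/-- View a bunch of atoms as a bunch of atomic formulae. -/
def Bunch.atomize {A : Type} : Bunch A → Bunch (Form A)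
  | .leaf p => .leaf (.atom p)
  | .aunit => .aunit
  | .munit => .munit
  | .semi Γ Δ => .semi Γ.atomize Δ.atomize
  | .comma Γ Δ => .comma Γ.atomize Δ.atomize

lemma fill_comp {X : Type} (c d : BunchCtx X) (Δ : Bunch X) :
    (c.comp d).fill Δ = c.fill (d.fill Δ) := by
  induction c <;> simp [BunchCtx.comp, BunchCtx.fill, *]

lemma BunchExt.refl {X : Type} (S : Bunch X) : BunchExt S S := by
  have := BunchExt.step (X := X) .hole S .aunit
    (Γ := S) (CohEq.symm (CohEq.semiUnit S))
  exact this

lemma bunchExt_fill {X : Type} (c : BunchCtx X) {S Q : Bunch X}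
    (h : BunchExt S Q) : BunchExt (c.fill S) (c.fill Q) := by
  induction h with
  | step d Δ Δ' hc =>
    rw [← fill_comp]
    exact BunchExt.step (c.comp d) Δ Δ' (by rw [fill_comp]; exact CohEq.congr c hc)
  | trans h1 h2 ih1 ih2 => exact BunchExt.trans ih1 ih2

lemma deriv_ext {A : Type} {X : Base A} {S Q : Bunch A} (h : BunchExt S Q) :
    ∀ (U : BunchCtx A) (p : A), Deriv X (U.fill Q) p → Deriv X (U.fill S) p := by
  induction h with
  | step c Δ Δ' hc =>
    intro U p hd
    have h1 : Deriv X ((U.comp c).fill Δ) p := by rw [fill_comp]; exact hd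
    have h2 := Deriv.weak (B := X) (U.comp c) Δ Δ' h1
    rw [fill_comp] at h2
    exact Deriv.exch U h2 (CohEq.symm hc)
  | trans h1 h2 ih1 ih2 => intro U p hd; exact ih1 U p (ih2 U p hd)

lemma suppF_mono {A : Type} (φ : Form A) :
    ∀ {B : Base A} {S Q : Bunch A}, BunchExt S Q → suppF φ B Q → suppF φ B S := by
  induction φ with
  | atom p => intro B S Q h hq; exact deriv_ext h .hole p hq
  | top => intro B S Q h hq X hX U p hd; exact deriv_ext h U p (hq X hX U p hd)
  | bot => intro B S Q h hq U p; exact deriv_ext h U p (hq U p)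
  | mtop => intro B S Q h hq X hX U p hd; exact deriv_ext h U p (hq X hX U p hd)
  | and φ ψ ihφ ihψ =>
    intro B S Q h hq X hX U p hd; exact deriv_ext h U p (hq X hX U p hd)
  | or φ ψ ihφ ihψ =>
    intro B S Q h hq X hX U p h1 h2; exact deriv_ext h U p (hq X hX U p h1 h2)
  | star φ ψ ihφ ihψ =>
    intro B S Q h hq X hX U p hd; exact deriv_ext h U p (hq X hX U p hd)
  | imp φ ψ ihφ ihψ =>
    intro B S Q h hq X hX U hU
    exact ihψ (bunchExt_fill (.semiL .hole U) h) (hq X hX U hU)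
  | wand φ ψ ihφ ihψ =>
    intro B S Q h hq X hX U hU
    exact ihψ (bunchExt_fill (.commaL .hole U) h) (hq X hX U hU)

lemma suppB_mono {A : Type} (Γ : Bunch (Form A)) :
    ∀ {B : Base A} {S Q : Bunch A}, BunchExt S Q → suppB Γ B Q → suppB Γ B S := by
  induction Γ with
  | leaf φ => intro B S Q h hq; exact suppF_mono φ h hq
  | aunit => intro B S Q h hq; trivial
  | munit => intro B S Q h hq; exact BunchExt.trans h hq
  | semi Γ Δ ihΓ ihΔ =>
    rintro B S Q h ⟨Q₁, Q₂, h1, h2, hΓ, hΔ⟩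
    exact ⟨Q₁, Q₂, BunchExt.trans h h1, BunchExt.trans h h2, hΓ, hΔ⟩
  | comma Γ Δ ihΓ ihΔ =>
    rintro B S Q h ⟨Q₁, Q₂, h1, hΓ, hΔ⟩
    exact ⟨Q₁, Q₂, BunchExt.trans h h1, hΓ, hΔ⟩

/-- support respects weakening and contraction of additive
bunches of hypotheses. -/
theorem suppB_hyp_weaken_contract {A : Type} (B : Base A) (S : Bunch A)
    (Γ : BunchCtx (Form A)) (Δ Δ' : Bunch (Form A)) :
    (suppB (Γ.fill (Bunch.semi Δ Δ')) B S → suppB (Γ.fill Δ) B S) ∧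
    (suppB (Γ.fill Δ) B S → suppB (Γ.fill (Bunch.semi Δ Δ)) B S) := by
  induction Γ generalizing S with
  | hole =>
    constructor
    · rintro ⟨Q₁, Q₂, h1, h2, hΔ, _⟩
      exact suppB_mono Δ h1 hΔ
    · intro h
      exact ⟨S, S, BunchExt.refl S, BunchExt.refl S, h, h⟩
  | semiL c Θ ih =>
    constructor
    · rintro ⟨Q₁, Q₂, h1, h2, hΓ, hΘ⟩
      exact ⟨Q₁, Q₂, h1, h2, (ih Q₁).1 hΓ, hΘ⟩
    · rintro ⟨Q₁, Q₂, h1, h2, hΓ, hΘ⟩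
      exact ⟨Q₁, Q₂, h1, h2, (ih Q₁).2 hΓ, hΘ⟩
  | semiR Θ c ih =>
    constructor
    · rintro ⟨Q₁, Q₂, h1, h2, hΘ, hΓ⟩
      exact ⟨Q₁, Q₂, h1, h2, hΘ, (ih Q₂).1 hΓ⟩
    · rintro ⟨Q₁, Q₂, h1, h2, hΘ, hΓ⟩
      exact ⟨Q₁, Q₂, h1, h2, hΘ, (ih Q₂).2 hΓ⟩
  | commaL c Θ ih =>
    constructor
    · rintro ⟨Q₁, Q₂, h1, hΓ, hΘ⟩
      exact ⟨Q₁, Q₂, h1, (ih Q₁).1 hΓ, hΘ⟩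
    · rintro ⟨Q₁, Q₂, h1, hΓ, hΘ⟩
      exact ⟨Q₁, Q₂, h1, (ih Q₁).2 hΓ, hΘ⟩
  | commaR Θ c ih =>
    constructor
    · rintro ⟨Q₁, Q₂, h1, hΘ, hΓ⟩
      exact ⟨Q₁, Q₂, h1, hΘ, (ih Q₂).1 hΓ⟩
    · rintro ⟨Q₁, Q₂, h1, hΘ, hΓ⟩
      exact ⟨Q₁, Q₂, h1, hΘ, (ih Q₂).2 hΓ⟩
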